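/- If 𝔽 and 𝔊 are maximal closed isotropic generalized flags in V (symplectic form) with St_𝔽 ⊆ St_𝔊 in 𝔰𝔭(V), then ⋃_{F∈𝔽} F = ⋃_{G∈𝔊} G; in fact 𝔽 = 𝔊, so the map 𝔽 ↦ St_𝔽 from maximal closed isotropic generalized flags in V to Borel subalgebras of 𝔰𝔭(V) is injective. -/

import Mathlib

attribute [local instance 100] LieRing.ofAssociativeRing

/-- The perpendicular complement of a subspace of `V` with respect to a
bilinear form `B` on `V`. -/
def perp {V : Type*} [AddCommGroup V] [Module ℂ V]
    (B : V →ₗ[ℂ] V →ₗ[ℂ] ℂ) (F : Submodule ℂ V) : Submodule ℂ V where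
  carrier := {y | ∀ x ∈ F, B x y = 0}
  add_mem' := by intro a b ha hb x hx; simp [map_add, ha x hx, hb x hx]
  zero_mem' := by intro x hx; simp
  smul_mem' := by intro c a ha x hx; simp [ha x hx]

/-- The Lie algebra of finite-rank endomorphisms of `V` that are skew-adjoint
with respect to `B`.  For a nondegenerate symmetric form this is
`𝔰𝔬(V) = ⋀²V`, and for a nondegenerate antisymmetric form it is
`𝔰𝔭(V) = Sym²(V)`, both inside `𝔤𝔩(V,V)`. -/
def skewFR {V : Type*} [AddCommGroup V] [Module ℂ V]
    (B : V →ₗ[ℂ] V →ₗ[ℂ] ℂ) : LieSubalgebra ℂ (Module.End ℂ V) where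
  carrier := {f | (∃ s : Set V, s.Finite ∧ LinearMap.range f ≤ Submodule.span ℂ s) ∧
    ∀ x y : V, B (f x) y = - B x (f y)}
  add_mem' := by
    rintro f g ⟨⟨s, hsf, hs⟩, hf⟩ ⟨⟨t, htf, ht⟩, hg⟩
    refine ⟨⟨s ∪ t, hsf.union htf, ?_⟩, fun x y => ?_⟩
    · rintro v ⟨x, rfl⟩
      have h1 : f x ∈ Submodule.span ℂ (s ∪ t) :=
        Submodule.span_mono Set.subset_union_left (hs ⟨x, rfl⟩)
      have h2 : g x ∈ Submodule.span ℂ (s ∪ t) :=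
        Submodule.span_mono Set.subset_union_right (ht ⟨x, rfl⟩)
      simpa [LinearMap.add_apply] using add_mem h1 h2
    · simp only [LinearMap.add_apply, map_add, LinearMap.add_apply, hf x y, hg x y]
      ring
  zero_mem' := by
    exact ⟨⟨∅, Set.finite_empty, by simp [LinearMap.range_zero]⟩, by simp⟩
  smul_mem' := by
    rintro c f ⟨⟨s, hsf, hs⟩, hf⟩
    refine ⟨⟨s, hsf, ?_⟩, fun x y => ?_⟩
    · rintro v ⟨x, rfl⟩
      simpa [LinearMap.smul_apply] using Submodule.smul_mem _ c (hs ⟨x, rfl⟩)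
    · simp only [LinearMap.smul_apply, map_smul, LinearMap.smul_apply, smul_eq_mul, hf x y]
      ring
  lie_mem' := by
    rintro f g ⟨⟨s, hsf, hs⟩, hf⟩ ⟨⟨t, htf, ht⟩, hg⟩
    have hbr : ∀ x : V, ⁅f, g⁆ x = f (g x) - g (f x) := by
      intro x
      rw [LieRing.of_associative_ring_bracket]
      simp [LinearMap.sub_apply, Module.End.mul_apply]
    constructor
    · refine ⟨s ∪ t, hsf.union htf, ?_⟩
      rintro v ⟨x, rfl⟩
      have h1 : f (g x) ∈ Submodule.span ℂ (s ∪ t) :=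
        Submodule.span_mono Set.subset_union_left (hs ⟨g x, rfl⟩)
      have h2 : g (f x) ∈ Submodule.span ℂ (s ∪ t) :=
        Submodule.span_mono Set.subset_union_right (ht ⟨f x, rfl⟩)
      rw [hbr]
      exact sub_mem h1 h2
    · intro x y
      rw [hbr, hbr]
      simp only [map_sub, LinearMap.sub_apply, map_sub, hf, hg]
      ring

/-- A Lie subalgebra is locally solvable if every finite subset of it is
contained in a solvable subalgebra (itself contained in the given one). -/
def LocallySolvable {L : Type*} [LieRing L] [LieAlgebra ℂ L]
    (b : LieSubalgebra ℂ L) : Prop :=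
  ∀ T : Finset L, (↑T : Set L) ⊆ (b : Set L) →
    ∃ K : LieSubalgebra ℂ L, (K : Set L) ⊆ (b : Set L) ∧
      LieAlgebra.IsSolvable K ∧ (↑T : Set L) ⊆ (K : Set L)

/-- A Borel subalgebra of `g`: a maximal locally solvable subalgebra of `g`. -/
def IsBorelIn {L : Type*} [LieRing L] [LieAlgebra ℂ L]
    (g b : LieSubalgebra ℂ L) : Prop :=
  b ≤ g ∧ LocallySolvable b ∧
    ∀ c : LieSubalgebra ℂ L, c ≤ g → LocallySolvable c → b ≤ c → c = b

/-- A subspace `N` of `V` is stable under a family `b` of endomorphisms. -/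
def StableUnder {V : Type*} [AddCommGroup V] [Module ℂ V]
    (b : LieSubalgebra ℂ (Module.End ℂ V)) (N : Submodule ℂ V) : Prop :=
  ∀ f ∈ b, ∀ x ∈ N, f x ∈ N

/-- `F` and `G` form an immediate predecessor-successor pair of the chain `C`. -/
def ImmPair {V : Type*} [AddCommGroup V] [Module ℂ V]
    (C : Set (Submodule ℂ V)) (F G : Submodule ℂ V) : Prop :=
  F ∈ C ∧ G ∈ C ∧ F < G ∧ ∀ H ∈ C, ¬(F < H ∧ H < G)

/-- A maximal closed isotropic generalized flag in `V`: a generalized flag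
consisting of isotropic subspaces (a generalized flag in its union), closed
(every immediate successor is closed and the closure of each immediate
predecessor is itself or its successor), with every good pair of codimension
one, whose union is a maximal isotropic subspace of `V`. -/
def IsMaxClosedIsoFlag {V : Type*} [AddCommGroup V] [Module ℂ V]
    (B : V →ₗ[ℂ] V →ₗ[ℂ] ℂ) (C : Set (Submodule ℂ V)) : Prop :=
  -- all members are isotropic
  (∀ F ∈ C, F ≤ perp B F) ∧
  -- C is a generalized flag in its union
  IsChain (· ≤ ·) C ∧
  (∀ F ∈ C, (∃ G, ImmPair C G F) ∨ (∃ G, ImmPair C F G)) ∧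
  (∀ x : V, x ≠ 0 → (∃ F ∈ C, x ∈ F) →
    ∃ F G, ImmPair C F G ∧ x ∈ G ∧ x ∉ F) ∧
  -- closedness
  (∀ F G, ImmPair C F G →
    perp B (perp B G) = G ∧
      (perp B (perp B F) = F ∨ perp B (perp B F) = G)) ∧
  -- every good pair has codimension one
  (∀ F G, ImmPair C F G → perp B (perp B F) = F →
    Module.rank ℂ (↥G ⧸ (F.comap G.subtype)) = 1) ∧
  -- the union is a maximal isotropic subspace of V
  (sSup C ≤ perp B (sSup C) ∧
    ∀ P : Submodule ℂ V, P ≤ perp B P → sSup C ≤ P → P = sSup C)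

/-- The stabilizer of a family of subspaces `C` in the skew algebra
(`𝔰𝔬(V)` or `𝔰𝔭(V)`), as a subset of `End V`. -/
def skewStab {V : Type*} [AddCommGroup V] [Module ℂ V]
    (B : V →ₗ[ℂ] V →ₗ[ℂ] ℂ) (C : Set (Submodule ℂ V)) :
    Set (Module.End ℂ V) :=
  {f | f ∈ skewFR B ∧ ∀ F ∈ C, ∀ x ∈ F, f x ∈ F}

/-!
Every member of a flag `𝔊` with `St_𝔽 ⊆ St_𝔊` is stable under `St_𝔽`, which contains the
symmetric tensors `a ⊗ z + z ⊗ a` for `z` in the successor `G` of an immediate pair `(F, G)`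
of `𝔽` and `a ⊥ F`. Applied to a vector `x` of a stable subspace `U ⊆ M = ⋃ 𝔽` with
`⟨a, x⟩ ≠ 0`, such a tensor forces `z ∈ U`; since `F^⊥⊥ ⊆ G`, this makes every stable
`U ⊆ M` comparable with every member of `𝔽`. Closedness and the codimension-one condition
then squeeze each member of `𝔊` onto a member of `𝔽`, and two such flags, one contained in
the other, coincide. The unions agree because `m ⊗ m` stabilizes `𝔽` for `m ∈ M_𝔽`, so that
`m` lies in `M_𝔊` or is orthogonal to it, and `M_𝔊` is Lagrangian.
-/

section Perp

variable {V : Type*} [AddCommGroup V] [Module ℂ V] {B : V →ₗ[ℂ] V →ₗ[ℂ] ℂ}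
  {F G : Submodule ℂ V}

theorem mem_perp {y : V} : y ∈ perp B F ↔ ∀ x ∈ F, B x y = 0 := Iff.rfl

theorem perp_le_perp (h : F ≤ G) : perp B G ≤ perp B F :=
  fun _ hy x hx => hy x (h hx)

theorem perp_perp_mono (h : F ≤ G) : perp B (perp B F) ≤ perp B (perp B G) :=
  perp_le_perp (perp_le_perp h)

theorem mem_perp_iff_le_ker {y : V} : y ∈ perp B F ↔ F ≤ LinearMap.ker (B.flip y) :=
  Iff.rfl

theorem perp_sup : perp B (F ⊔ G) = perp B F ⊓ perp B G := by
  ext y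
  simp only [Submodule.mem_inf, mem_perp_iff_le_ker, sup_le_iff]

theorem le_perp_comm (hB : B.IsAlt) : F ≤ perp B G ↔ G ≤ perp B F :=
  ⟨fun h _ hy _ hx => hB.eq_iff.mp (h hx _ hy), fun h _ hy _ hx => hB.eq_iff.mp (h hx _ hy)⟩

theorem sup_span_le_perp (hB : B.IsAlt) (hF : F ≤ perp B F) {m : V} (hm : m ∈ perp B F) :
    F ⊔ Submodule.span ℂ {m} ≤ perp B (F ⊔ Submodule.span ℂ {m}) := by
  have hmm : m ∈ perp B (Submodule.span ℂ {m}) := by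
    rintro x hx
    obtain ⟨c, rfl⟩ := Submodule.mem_span_singleton.mp hx
    simp [hB.self_eq_zero]
  have hFm : F ≤ perp B (Submodule.span ℂ {m}) :=
    (le_perp_comm hB).mpr ((Submodule.span_singleton_le_iff_mem _ _).mpr hm)
  simp only [perp_sup, sup_le_iff, le_inf_iff, Submodule.span_singleton_le_iff_mem]
  exact ⟨⟨hF, hm⟩, hFm, hmm⟩

end Perp

section SymTensor

variable {V : Type*} [AddCommGroup V] [Module ℂ V] {B : V →ₗ[ℂ] V →ₗ[ℂ] ℂ}

/-- The element `a ⊗ z + z ⊗ a` of `Sym²(V) = 𝔰𝔭(V)`, acting by `(x ⊗ y) · u = ⟨u, y⟩ x`. -/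
def symTensor (B : V →ₗ[ℂ] V →ₗ[ℂ] ℂ) (a z : V) : Module.End ℂ V :=
  (B.flip a).smulRight z + (B.flip z).smulRight a

@[simp]
theorem symTensor_apply (a z u : V) : symTensor B a z u = B u a • z + B u z • a := rfl

theorem symTensor_apply_of_eq_zero {a z u : V} (h : B u z = 0) :
    symTensor B a z u = B u a • z := by
  simp [h]

theorem symTensor_mem_skewFR (hB : B.IsAlt) (a z : V) : symTensor B a z ∈ skewFR B := by
  refine ⟨⟨{z, a}, Set.toFinite _, ?_⟩, fun x y => ?_⟩
  · rintro _ ⟨u, rfl⟩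
    rw [symTensor_apply]
    exact add_mem (Submodule.smul_mem _ _ (Submodule.subset_span (by simp)))
      (Submodule.smul_mem _ _ (Submodule.subset_span (by simp)))
  · simp only [symTensor_apply, map_add, map_smul, LinearMap.add_apply, LinearMap.smul_apply,
      smul_eq_mul]
    rw [← hB.neg y z, ← hB.neg y a]
    ring

theorem apply_mem_sSup_of_mem_skewStab {C : Set (Submodule ℂ V)} {f : Module.End ℂ V}
    (hf : f ∈ skewStab B C) {x : V} (hx : x ∈ sSup C) : f x ∈ sSup C :=
  (sSup_le fun H hH _ hu => le_sSup hH (hf.2 H hH _ hu) : sSup C ≤ (sSup C).comap f) hx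

theorem symTensor_mem_skewStab (hB : B.IsAlt) {C : Set (Submodule ℂ V)}
    (hC : sSup C ≤ perp B (sSup C)) {a z : V} (hz : z ∈ sSup C)
    (h : ∀ H ∈ C, z ∈ H ∨ a ∈ perp B H) : symTensor B a z ∈ skewStab B C := by
  refine ⟨symTensor_mem_skewFR hB a z, fun H hH u hu => ?_⟩
  rw [symTensor_apply_of_eq_zero (hC hz u (le_sSup hH hu))]
  rcases h H hH with hzH | haH
  · exact H.smul_mem _ hzH
  · rw [haH u hu, zero_smul]
    exact H.zero_mem

end SymTensor

section Chain

variable {V : Type*} [AddCommGroup V] [Module ℂ V] {C : Set (Submodule ℂ V)}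
  {F G H : Submodule ℂ V} {x : V}

theorem ImmPair.pred_mem (hp : ImmPair C F G) : F ∈ C := hp.1

theorem ImmPair.succ_mem (hp : ImmPair C F G) : G ∈ C := hp.2.1

theorem ImmPair.lt (hp : ImmPair C F G) : F < G := hp.2.2.1

theorem ImmPair.le_or_le (hch : IsChain (· ≤ ·) C) (hp : ImmPair C F G) (hH : H ∈ C) :
    H ≤ F ∨ G ≤ H := by
  obtain ⟨hF, hG, -, himm⟩ := hp
  by_contra! h
  exact himm H hH ⟨lt_of_le_not_ge ((hch.total hH hF).resolve_left h.1) h.1,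
    lt_of_le_not_ge ((hch.total hG hH).resolve_left h.2) h.2⟩

theorem ImmPair.le_of_mem (hch : IsChain (· ≤ ·) C) (hp : ImmPair C F G) (hxF : x ∉ F)
    (hH : H ∈ C) (hxH : x ∈ H) : G ≤ H :=
  (hp.le_or_le hch hH).resolve_left fun h => hxF (h hxH)

theorem ImmPair.le_of_notMem (hch : IsChain (· ≤ ·) C) (hp : ImmPair C F G) (hxG : x ∈ G)
    (hH : H ∈ C) (hxH : x ∉ H) : H ≤ F :=
  (hp.le_or_le hch hH).resolve_right fun h => hxH (h hxG)

end Chain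

theorem Submodule.le_sup_span_of_rank_quotient_eq_one {K V : Type*} [Field K] [AddCommGroup V]
    [Module K V] {F G : Submodule K V} (hrk : Module.rank K (G ⧸ F.comap G.subtype) = 1)
    {x : V} (hxG : x ∈ G) (hxF : x ∉ F) : G ≤ F ⊔ span K {x} := by
  intro g hg
  have hx : (F.comap G.subtype).mkQ ⟨x, hxG⟩ ≠ 0 := by simpa using hxF
  obtain ⟨c, hc⟩ := (finrank_eq_one_iff_of_nonzero' _ hx).mp
    (Module.rank_eq_one_iff_finrank_eq_one.mp hrk) ((F.comap G.subtype).mkQ ⟨g, hg⟩)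
  rw [← map_smul, mkQ_apply, mkQ_apply, Quotient.eq] at hc
  rw [← sub_sub_cancel (c • x) g]
  exact sub_mem (mem_sup_right (smul_mem _ _ (mem_span_singleton_self x)))
    (mem_sup_left (by simpa using hc))

namespace IsMaxClosedIsoFlag

variable {V : Type*} [AddCommGroup V] [Module ℂ V] {B : V →ₗ[ℂ] V →ₗ[ℂ] ℂ}
  {C D : Set (Submodule ℂ V)} {F G : Submodule ℂ V} {x : V}

theorem isChain (hC : IsMaxClosedIsoFlag B C) : IsChain (· ≤ ·) C := hC.2.1

theorem exists_immPair_of_mem (hC : IsMaxClosedIsoFlag B C) (hF : F ∈ C) :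
    (∃ E, ImmPair C E F) ∨ ∃ G, ImmPair C F G :=
  hC.2.2.1 F hF

theorem exists_immPair (hC : IsMaxClosedIsoFlag B C) (hx : x ∈ sSup C) (hx0 : x ≠ 0) :
    ∃ F G, ImmPair C F G ∧ x ∈ G ∧ x ∉ F := by
  refine hC.2.2.2.1 x hx0 ?_
  rcases C.eq_empty_or_nonempty with rfl | hne
  · exact absurd ((Submodule.mem_bot ℂ).mp (sSup_empty (α := Submodule ℂ V) ▸ hx)) hx0
  · exact (Submodule.mem_sSup_of_directed hne hC.isChain.directedOn).mp hx

theorem perp_perp_succ (hC : IsMaxClosedIsoFlag B C) (hp : ImmPair C F G) :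
    perp B (perp B G) = G :=
  (hC.2.2.2.2.1 F G hp).1

theorem perp_perp_pred_le (hC : IsMaxClosedIsoFlag B C) (hp : ImmPair C F G) :
    perp B (perp B F) ≤ G := by
  rcases (hC.2.2.2.2.1 F G hp).2 with h | h <;> rw [h]
  exact hp.lt.le

/-- For a good pair this is the codimension-one condition; otherwise `F^⊥⊥ = G`. -/
theorem le_perp_perp_sup (hC : IsMaxClosedIsoFlag B C) (hp : ImmPair C F G) (hxG : x ∈ G)
    (hxF : x ∉ F) : G ≤ perp B (perp B F) ⊔ Submodule.span ℂ {x} := by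
  rcases (hC.2.2.2.2.1 F G hp).2 with hcl | hcl
  · rw [hcl]
    exact Submodule.le_sup_span_of_rank_quotient_eq_one (hC.2.2.2.2.2.1 F G hp hcl) hxG hxF
  · exact hcl ▸ le_sup_left

theorem sSup_le_perp (hC : IsMaxClosedIsoFlag B C) : sSup C ≤ perp B (sSup C) :=
  hC.2.2.2.2.2.2.1

theorem eq_sSup (hC : IsMaxClosedIsoFlag B C) {P : Submodule ℂ V} (hP : P ≤ perp B P)
    (h : sSup C ≤ P) : P = sSup C :=
  hC.2.2.2.2.2.2.2 P hP h

theorem mem_sSup_of_mem_perp (hB : B.IsAlt) (hC : IsMaxClosedIsoFlag B C) {m : V}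
    (hm : m ∈ perp B (sSup C)) : m ∈ sSup C :=
  hC.eq_sSup (sup_span_le_perp hB hC.sSup_le_perp hm) le_sup_left ▸
    Submodule.mem_sup_right (Submodule.mem_span_singleton_self m)

theorem succ_le_of_pred_le (hC : IsMaxClosedIsoFlag B C) (hD : IsMaxClosedIsoFlag B D)
    {F' G' : Submodule ℂ V} (hpD : ImmPair D F' G') (hpC : ImmPair C F G) (hxG' : x ∈ G')
    (hxF' : x ∉ F') (hxG : x ∈ G) (h : F' ≤ F) : G' ≤ G :=
  (hD.le_perp_perp_sup hpD hxG' hxF').trans <| sup_le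
    ((perp_perp_mono h).trans (hC.perp_perp_pred_le hpC))
    ((Submodule.span_singleton_le_iff_mem _ _).mpr hxG)

theorem eq_of_subset (hC : IsMaxClosedIsoFlag B C) (hD : IsMaxClosedIsoFlag B D)
    (hDC : D ⊆ C) : D = C := by
  have hM : sSup C = sSup D := hD.eq_sSup hC.sSup_le_perp (sSup_le_sSup hDC)
  refine Set.Subset.antisymm hDC fun F hF => ?_
  by_contra hFD
  rcases hC.exists_immPair_of_mem hF with ⟨E, hpE⟩ | ⟨G, hpG⟩
  · obtain ⟨x, hxF, hxE⟩ := SetLike.exists_of_lt hpE.lt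
    obtain ⟨F', G', hp', hxG', hxF'⟩ :=
      hD.exists_immPair (hM ▸ le_sSup hF hxF) (by rintro rfl; exact hxE E.zero_mem)
    have hF'E : F' ≤ E := hpE.le_of_notMem hC.isChain hxF (hDC hp'.pred_mem) hxF'
    have hFG' : F ≤ G' := hpE.le_of_mem hC.isChain hxE (hDC hp'.succ_mem) hxG'
    have hG'F : G' ≤ F := hC.succ_le_of_pred_le hD hp' hpE hxG' hxF' hxF hF'E
    exact hFD (le_antisymm hFG' hG'F ▸ hp'.succ_mem)
  · obtain ⟨x, hxG, hxF⟩ := SetLike.exists_of_lt hpG.lt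
    obtain ⟨F', G', hp', hxG', hxF'⟩ :=
      hD.exists_immPair (hM ▸ le_sSup hpG.succ_mem hxG) (by rintro rfl; exact hxF F.zero_mem)
    have hF'F : F' ≤ F := hpG.le_of_notMem hC.isChain hxG (hDC hp'.pred_mem) hxF'
    have hGG' : G ≤ G' := hpG.le_of_mem hC.isChain hxF (hDC hp'.succ_mem) hxG'
    obtain ⟨z, hzF, hzF'⟩ :=
      SetLike.exists_of_lt (lt_of_le_of_ne hF'F fun h => hFD (h ▸ hp'.pred_mem))
    obtain ⟨Fz, Gz, hpz, hzGz, hzFz⟩ :=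
      hC.exists_immPair (le_sSup hF hzF) (by rintro rfl; exact hzF' F'.zero_mem)
    have hF'Fz : F' ≤ Fz := hpz.le_of_notMem hC.isChain hzGz (hDC hp'.pred_mem) hzF'
    have hG'Gz : G' ≤ Gz :=
      hC.succ_le_of_pred_le hD hp' hpz (hGG' (hpG.lt.le hzF)) hzF' hzGz hF'Fz
    have hGzF : Gz ≤ F := hpz.le_of_mem hC.isChain hzFz hF hzF
    exact hpG.lt.not_ge (hGG'.trans (hG'Gz.trans hGzF))

end IsMaxClosedIsoFlag

section Stable

variable {V : Type*} [AddCommGroup V] [Module ℂ V] {B : V →ₗ[ℂ] V →ₗ[ℂ] ℂ}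
  {C : Set (Submodule ℂ V)} {U F G : Submodule ℂ V}

theorem mem_of_stable_of_notMem_perp_perp (hB : B.IsAlt) (hC : IsMaxClosedIsoFlag B C)
    (hU : ∀ f ∈ skewStab B C, ∀ u ∈ U, f u ∈ U) (hUM : U ≤ sSup C) {x z : V} (hxU : x ∈ U)
    (hp : ImmPair C F G) (hzG : z ∈ G) (hx : x ∉ perp B (perp B F)) : z ∈ U := by
  obtain ⟨a, ha, hax⟩ : ∃ a ∈ perp B F, B a x ≠ 0 := by
    simpa only [mem_perp, not_forall, exists_prop] using hx
  have hz : z ∈ sSup C := le_sSup hp.succ_mem hzG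
  have hf : symTensor B a z ∈ skewStab B C :=
    symTensor_mem_skewStab hB hC.sSup_le_perp hz fun H hH =>
      (hp.le_or_le hC.isChain hH).symm.imp (fun h => h hzG) (fun h => perp_le_perp h ha)
  have hfx := hU _ hf x hxU
  rw [symTensor_apply_of_eq_zero (hC.sSup_le_perp hz x (hUM hxU))] at hfx
  exact (U.smul_mem_iff (by rwa [← hB.neg, neg_ne_zero])).mp hfx

theorem le_or_le_of_stable (hB : B.IsAlt) (hC : IsMaxClosedIsoFlag B C)
    (hU : ∀ f ∈ skewStab B C, ∀ u ∈ U, f u ∈ U) (hUM : U ≤ sSup C) {H : Submodule ℂ V}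
    (hH : H ∈ C) : H ≤ U ∨ U ≤ H := by
  by_contra! h
  obtain ⟨z, hzH, hzU⟩ := Set.not_subset.mp h.1
  obtain ⟨x, hxU, hxH⟩ := Set.not_subset.mp h.2
  obtain ⟨Fz, Gz, hpz, hzGz, hzFz⟩ :=
    hC.exists_immPair (le_sSup hH hzH) (by rintro rfl; exact hzU U.zero_mem)
  have hGzH : Gz ≤ H := hpz.le_of_mem hC.isChain hzFz hH hzH
  exact hzU <| mem_of_stable_of_notMem_perp_perp hB hC hU hUM hxU hpz hzGz
    fun hx => hxH (hGzH (hC.perp_perp_pred_le hpz hx))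

theorem succ_le_of_stable_of_perp_perp_le (hB : B.IsAlt) (hC : IsMaxClosedIsoFlag B C)
    (hU : ∀ f ∈ skewStab B C, ∀ u ∈ U, f u ∈ U) (hUM : U ≤ sSup C)
    (hcl : perp B (perp B U) ≤ U) (hp : ImmPair C F G) {x : V} (hxG : x ∈ G) (hxF : x ∉ F)
    (hxU : x ∈ U) : G ≤ U := by
  have hFU : F ≤ U :=
    (le_or_le_of_stable hB hC hU hUM hp.pred_mem).resolve_right fun h => hxF (h hxU)
  exact (hC.le_perp_perp_sup hp hxG hxF).trans <|
    sup_le ((perp_perp_mono hFU).trans hcl) ((Submodule.span_singleton_le_iff_mem _ _).mpr hxU)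

end Stable

section SkewStabSubset

variable {V : Type*} [AddCommGroup V] [Module ℂ V] {B : V →ₗ[ℂ] V →ₗ[ℂ] ℂ}
  {C D : Set (Submodule ℂ V)} {F G : Submodule ℂ V}

theorem sSup_eq_of_skewStab_subset (hB : B.IsAlt) (hC : IsMaxClosedIsoFlag B C)
    (hD : IsMaxClosedIsoFlag B D) (hsub : skewStab B C ⊆ skewStab B D) : sSup C = sSup D := by
  refine (hC.eq_sSup hD.sSup_le_perp fun m hm => ?_).symm
  by_contra hmD
  obtain ⟨x, hx, hxm⟩ : ∃ x ∈ sSup D, B x m ≠ 0 := by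
    simpa only [mem_perp, not_forall, exists_prop] using mt (hD.mem_sSup_of_mem_perp hB) hmD
  have hf : symTensor B m m ∈ skewStab B D := hsub <|
    symTensor_mem_skewStab hB hC.sSup_le_perp hm fun H hH =>
      Or.inr (perp_le_perp (le_sSup hH) (hC.sSup_le_perp hm))
  have hfx := apply_mem_sSup_of_mem_skewStab hf hx
  rw [symTensor_apply, ← add_smul] at hfx
  exact hmD (((sSup D).smul_mem_iff fun h => hxm (add_self_eq_zero.mp h)).mp hfx)

theorem succ_le_of_mem_of_skewStab_subset (hB : B.IsAlt) (hC : IsMaxClosedIsoFlag B C)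
    (hD : IsMaxClosedIsoFlag B D) (hsub : skewStab B C ⊆ skewStab B D) {W : Submodule ℂ V}
    (hW : W ∈ D) (hp : ImmPair C F G) {x : V} (hxG : x ∈ G) (hxF : x ∉ F) (hxW : x ∈ W) :
    G ≤ W := by
  have hM := sSup_eq_of_skewStab_subset hB hC hD hsub
  obtain ⟨F', G', hp', hxG', hxF'⟩ :=
    hD.exists_immPair (le_sSup hW hxW) (by rintro rfl; exact hxF F.zero_mem)
  have hGG' : G ≤ G' :=
    succ_le_of_stable_of_perp_perp_le hB hC (fun f hf => (hsub hf).2 G' hp'.succ_mem)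
      (hM ▸ le_sSup hp'.succ_mem) (hD.perp_perp_succ hp').le hp hxG hxF hxG'
  exact hGG'.trans (hp'.le_of_mem hD.isChain hxF' hW hxW)

theorem le_pred_of_notMem_of_skewStab_subset (hB : B.IsAlt) (hC : IsMaxClosedIsoFlag B C)
    (hD : IsMaxClosedIsoFlag B D) (hsub : skewStab B C ⊆ skewStab B D) {W : Submodule ℂ V}
    (hW : W ∈ D) (hp : ImmPair C F G) {y : V} (hyG : y ∈ G) (hyW : y ∉ W) : W ≤ F := by
  have hM := sSup_eq_of_skewStab_subset hB hC hD hsub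
  have hWG : W ≤ G := (le_or_le_of_stable hB hC (fun f hf => (hsub hf).2 W hW)
    (hM ▸ le_sSup hW) hp.succ_mem).resolve_left fun h => hyW (h hyG)
  intro x hxW
  by_contra hxF
  exact hyW (succ_le_of_mem_of_skewStab_subset hB hC hD hsub hW hp (hWG hxW) hxF hxW hyG)

theorem subset_of_skewStab_subset (hB : B.IsAlt) (hC : IsMaxClosedIsoFlag B C)
    (hD : IsMaxClosedIsoFlag B D) (hsub : skewStab B C ⊆ skewStab B D) : D ⊆ C := by
  have hM := sSup_eq_of_skewStab_subset hB hC hD hsub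
  intro W hW
  rcases hD.exists_immPair_of_mem hW with ⟨P, hpP⟩ | ⟨Q, hpQ⟩
  · obtain ⟨y, hyW, hyP⟩ := SetLike.exists_of_lt hpP.lt
    obtain ⟨Fy, Gy, hpy, hyG, hyF⟩ :=
      hC.exists_immPair (hM ▸ le_sSup hW hyW) (by rintro rfl; exact hyP P.zero_mem)
    have hPF : P ≤ Fy :=
      le_pred_of_notMem_of_skewStab_subset hB hC hD hsub hpP.pred_mem hpy hyG hyP
    have hWG : W ≤ Gy := hC.succ_le_of_pred_le hD hpP hpy hyW hyP hyG hPF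
    have hGW : Gy ≤ W := succ_le_of_mem_of_skewStab_subset hB hC hD hsub hW hpy hyG hyF hyW
    exact le_antisymm hWG hGW ▸ hpy.succ_mem
  · obtain ⟨y, hyQ, hyW⟩ := SetLike.exists_of_lt hpQ.lt
    obtain ⟨Fy, Gy, hpy, hyG, hyF⟩ :=
      hC.exists_immPair (hM ▸ le_sSup hpQ.succ_mem hyQ) (by rintro rfl; exact hyW W.zero_mem)
    have hGQ : Gy ≤ Q :=
      succ_le_of_mem_of_skewStab_subset hB hC hD hsub hpQ.succ_mem hpy hyG hyF hyQ
    have hWF : W ≤ Fy := le_pred_of_notMem_of_skewStab_subset hB hC hD hsub hW hpy hyG hyW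
    suffices hFW : Fy ≤ W from le_antisymm hWF hFW ▸ hpy.pred_mem
    intro u huF
    by_contra huW
    obtain ⟨Fu, Gu, hpu, huG, huF'⟩ :=
      hC.exists_immPair (le_sSup hpy.pred_mem huF) (by rintro rfl; exact huW W.zero_mem)
    have hWFu : W ≤ Fu := le_pred_of_notMem_of_skewStab_subset hB hC hD hsub hW hpu huG huW
    have hQG : Q ≤ Gu := hC.succ_le_of_pred_le hD hpQ hpu (hGQ (hpy.lt.le huF)) huW huG hWFu
    exact hyF (hpu.le_of_mem hC.isChain huF' hpy.pred_mem huF (hQG hyQ))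

end SkewStabSubset

theorem sp_isoFlag_eq_of_stab_le_general
    {V : Type*} [AddCommGroup V] [Module ℂ V]
    (B : V →ₗ[ℂ] V →ₗ[ℂ] ℂ)
    (hAlt : ∀ x y : V, B x y = - B y x) :
    (∀ C D : Set (Submodule ℂ V),
      IsMaxClosedIsoFlag B C → IsMaxClosedIsoFlag B D →
      skewStab B C ⊆ skewStab B D →
      sSup C = sSup D ∧ C = D) ∧
    -- injectivity of the map 𝔽 ↦ St_𝔽
    (∀ C D : Set (Submodule ℂ V),
      IsMaxClosedIsoFlag B C → IsMaxClosedIsoFlag B D →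
      skewStab B C = skewStab B D → C = D) := by
  have hB : B.IsAlt := LinearMap.isAlt_iff_eq_neg_flip.mpr (by ext x y; simp [hAlt x y])
  have key : ∀ C D : Set (Submodule ℂ V), IsMaxClosedIsoFlag B C → IsMaxClosedIsoFlag B D →
      skewStab B C ⊆ skewStab B D → sSup C = sSup D ∧ C = D := fun C D hC hD hsub =>
    ⟨sSup_eq_of_skewStab_subset hB hC hD hsub,
      (hC.eq_of_subset hD (subset_of_skewStab_subset hB hC hD hsub)).symm⟩
  exact ⟨key, fun C D hC hD h => (key C D hC hD h.subset).2⟩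

/-- if `𝔽` and `𝔊` are maximal closed isotropic generalized
flags in `V` (symplectic form) with `St_𝔽 ⊆ St_𝔊` in `𝔰𝔭(V)`, then
`⋃_{F∈𝔽} F = ⋃_{G∈𝔊} G`; in fact `𝔽 = 𝔊`, so the map `𝔽 ↦ St_𝔽` from maximal
closed isotropic generalized flags in `V` to Borel subalgebras of `𝔰𝔭(V)` is
injective. -/
theorem sp_isoFlag_eq_of_stab_le
    {V : Type*} [AddCommGroup V] [Module ℂ V]
    (hV : Module.rank ℂ V ≤ Cardinal.aleph0)
    (B : V →ₗ[ℂ] V →ₗ[ℂ] ℂ)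
    (hB : ∀ x : V, (∀ y : V, B x y = 0) → x = 0)
    (hAlt : ∀ x y : V, B x y = - B y x) :
    (∀ C D : Set (Submodule ℂ V),
      IsMaxClosedIsoFlag B C → IsMaxClosedIsoFlag B D →
      skewStab B C ⊆ skewStab B D →
      sSup C = sSup D ∧ C = D) ∧
    -- injectivity of the map 𝔽 ↦ St_𝔽
    (∀ C D : Set (Submodule ℂ V),
      IsMaxClosedIsoFlag B C → IsMaxClosedIsoFlag B D →
      skewStab B C = skewStab B D → C = D) :=
  sp_isoFlag_eq_of_stab_le_general B hAlt
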